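/- arXiv:2502.19143 — 2 statements merged into one kernel-verified Lean document; each statement's English description precedes it below -/
import Mathlib

section
/- Confluence of speculative expansion: if a set of Statix solver configurations κ̄ steps to κ̄₁ (κ̄ ↠ κ̄₁) and also to κ̄₂ (κ̄ ↠ κ̄₂), then there exists a set of configurations κ̄' such that κ̄₁ ↠* κ̄' and κ̄₂ ↠* κ̄' (where ↠* is the reflexive-transitive closure of ↠). -/
/-!
Statement 0: Confluence of the speculative-expansion relation ↠ on sets of
Statix solver configurations.

A configuration κ = ⟨G | C̄ | U | H⟩ consists of a scope graph `G`, a set of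
constraints `C̄`, a partial map `U` from unification variables to holes, and a
partial map `H` from holes to pairs (s*, t) of a sequence of scopes and a term.
The Statix constraint-solving step relation `step` (→) and the speculative
single-configuration expansion relation `expand` (↣) are abstract parameters;
`step` is assumed confluent (Rouvoet et al., Theorem 4.5).
-/

open Relation

set_option maxHeartbeats 1000000

/-- A Statix solver configuration ⟨G | C̄ | U | H⟩. -/
structure Config (Graph Constraint Var Hole Scope Term : Type) where
  graph : Graph
  constraints : Set Constraint
  uvars : Var → Option Hole
  holes : Hole → Option (List Scope × Term)

variable {Graph Constraint Var Hole Scope Term : Type}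

/-- `Accept(C̄, H)`: all constraints are solved, and the state of every hole
has a scope-sequence component of length > 1. -/
def Accept (κ : Config Graph Constraint Var Hole Scope Term) : Prop :=
  κ.constraints = ∅ ∧ ∀ h ss t, κ.holes h = some (ss, t) → 1 < ss.length

/-- The relation ↠ on sets of configurations: rule `Op-Solve` performs a
→-step on one configuration of the set; rule `Op-Expand` replaces a →-stuck,
non-accepting configuration by the set of ALL its ↣-expansions at once. -/
inductive MStep
    (step expand : Config Graph Constraint Var Hole Scope Term →
      Config Graph Constraint Var Hole Scope Term → Prop) :
    Set (Config Graph Constraint Var Hole Scope Term) →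
    Set (Config Graph Constraint Var Hole Scope Term) → Prop
  | solve {m : Set (Config Graph Constraint Var Hole Scope Term)} {κ κ'} :
      κ ∈ m → step κ κ' →
      MStep step expand m (insert κ' (m \ {κ}))
  | expand {m : Set (Config Graph Constraint Var Hole Scope Term)} {κ} :
      κ ∈ m → (∀ κ', ¬ step κ κ') → ¬ Accept κ →
      MStep step expand m ((m \ {κ}) ∪ {κ' | expand κ κ'})

section Auxiliary

variable (step expand : Config Graph Constraint Var Hole Scope Term →
    Config Graph Constraint Var Hole Scope Term → Prop)

/-- If `a →* d`, then there is a finite "chain set" `C` containing `a` such that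
every element `z` of `C` can be run (inside any set `T` containing it) down to
`d` via ↠-steps, at the cost of removing a subset `Cz ⊆ C` containing `z`. -/
lemma chain_run {a d : Config Graph Constraint Var Hole Scope Term}
    (h : ReflTransGen step a d) :
    ∃ C : Set (Config Graph Constraint Var Hole Scope Term), C.Finite ∧ a ∈ C ∧
      ∀ z ∈ C, ∃ Cz, Cz ⊆ C ∧ z ∈ Cz ∧
        ∀ T : Set (Config Graph Constraint Var Hole Scope Term), z ∈ T →
          ReflTransGen (MStep step expand) T (insert d (T \ Cz)) := by
  induction h using ReflTransGen.head_induction_on with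
  | refl =>
    refine ⟨{d}, Set.finite_singleton d, Set.mem_singleton d, ?_⟩
    intro z hz
    rw [Set.mem_singleton_iff] at hz; subst hz
    refine ⟨{z}, le_rfl, Set.mem_singleton z, ?_⟩
    intro T hT
    have heq : insert z (T \ {z}) = T := by
      rw [Set.insert_diff_singleton, Set.insert_eq_of_mem hT]
    rw [heq]
  | @head a' b' hab hbd ih =>
    obtain ⟨C', hfin, hbC, hprop⟩ := ih
    refine ⟨insert a' C', hfin.insert a', Set.mem_insert _ _, ?_⟩
    intro z hz
    rcases Set.mem_insert_iff.mp hz with rfl | hz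
    · obtain ⟨Cb, hCb, hbCb, hrun⟩ := hprop _ hbC
      refine ⟨insert z Cb, Set.insert_subset_insert hCb, Set.mem_insert _ _, ?_⟩
      intro T hT
      have h1 : MStep step expand T (insert b' (T \ {z})) := MStep.solve hT hab
      have h2 := hrun (insert b' (T \ {z})) (Set.mem_insert _ _)
      have he : insert d (insert b' (T \ {z}) \ Cb) = insert d (T \ insert z Cb) := by
        ext x
        simp only [Set.mem_insert_iff, Set.mem_diff, Set.mem_singleton_iff]
        have hxb : x = b' → x ∈ Cb := fun h => h ▸ hbCb
        tauto
      exact ReflTransGen.head h1 (he ▸ h2)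
    · obtain ⟨Cz, hsub, hzCz, hrun⟩ := hprop z hz
      exact ⟨Cz, hsub.trans (Set.subset_insert _ _), hzCz, hrun⟩

/-- Sweeping a finite set `Y` of configurations, each of which can be run down
to `d`, out of any set `T` containing `d`. -/
lemma sweep {d : Config Graph Constraint Var Hole Scope Term}
    {Y : Set (Config Graph Constraint Var Hole Scope Term)} (hfin : Y.Finite)
    (hY : ∀ z ∈ Y, ∃ Cz, Cz ⊆ Y ∧ z ∈ Cz ∧
      ∀ T : Set (Config Graph Constraint Var Hole Scope Term), z ∈ T →
        ReflTransGen (MStep step expand) T (insert d (T \ Cz))) :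
    ∀ T : Set (Config Graph Constraint Var Hole Scope Term), d ∈ T →
      ReflTransGen (MStep step expand) T (insert d (T \ Y)) := by
  have base : ∀ T : Set (Config Graph Constraint Var Hole Scope Term), d ∈ T →
      (T ∩ Y) \ {d} = ∅ → insert d (T \ Y) = T := by
    intro T hdT hemp
    ext x
    have hx : x ∉ (T ∩ Y) \ {d} := hemp ▸ Set.notMem_empty x
    simp only [Set.mem_insert_iff, Set.mem_diff, Set.mem_inter_iff,
      Set.mem_singleton_iff] at hx ⊢
    have hxd : x = d → x ∈ T := fun h => h ▸ hdT
    tauto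
  suffices key : ∀ (n : ℕ) (T : Set (Config Graph Constraint Var Hole Scope Term)),
      d ∈ T → ((T ∩ Y) \ {d}).ncard ≤ n →
      ReflTransGen (MStep step expand) T (insert d (T \ Y)) by
    intro T hdT; exact key _ T hdT le_rfl
  intro n
  induction n with
  | zero =>
    intro T hdT hcard
    have hfinT : ((T ∩ Y) \ {d}).Finite := hfin.subset (fun x hx => hx.1.2)
    have hemp : (T ∩ Y) \ {d} = ∅ := (Set.ncard_eq_zero hfinT).mp (Nat.le_zero.mp hcard)
    rw [base T hdT hemp]
  | succ n ih =>
    intro T hdT hcard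
    by_cases hemp : (T ∩ Y) \ {d} = ∅
    · rw [base T hdT hemp]
    · obtain ⟨z, hz⟩ := Set.nonempty_iff_ne_empty.mpr hemp
      obtain ⟨⟨hzT, hzY⟩, hzd⟩ := hz
      rw [Set.mem_singleton_iff] at hzd
      obtain ⟨Cz, hsub, hzCz, hrun⟩ := hY z hzY
      have h1 := hrun T hzT
      have hss : ((insert d (T \ Cz) ∩ Y) \ {d}) ⊂ ((T ∩ Y) \ {d}) := by
        constructor
        · rintro x ⟨⟨hx1, hx2⟩, hx3⟩
          rcases Set.mem_insert_iff.mp hx1 with rfl | ⟨hxT, hxC⟩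
          · exact absurd rfl hx3
          · exact ⟨⟨hxT, hx2⟩, hx3⟩
        · intro hcon
          have hmem := hcon ⟨⟨hzT, hzY⟩, fun h => hzd (Set.mem_singleton_iff.mp h)⟩
          rcases Set.mem_insert_iff.mp hmem.1.1 with h | h
          · exact hzd h
          · exact h.2 hzCz
      have hlt := Set.ncard_lt_ncard hss (hfin.subset (fun x hx => hx.1.2))
      have h2 := ih (insert d (T \ Cz)) (Set.mem_insert _ _) (by omega)
      have he : insert d (insert d (T \ Cz) \ Y) = insert d (T \ Y) := by
        ext x
        simp only [Set.mem_insert_iff, Set.mem_diff]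
        have hsx : x ∈ Cz → x ∈ Y := fun h => hsub h
        tauto
      exact h1.trans (he ▸ h2)

/-- Joining two `Op-Solve` steps performed on the same configuration of the
set, using confluence of `step`. -/
lemma join_same
    (hconf : ∀ κ κ₁ κ₂, ReflTransGen step κ κ₁ → ReflTransGen step κ κ₂ →
      ∃ κ', ReflTransGen step κ₁ κ' ∧ ReflTransGen step κ₂ κ')
    {κ b c : Config Graph Constraint Var Hole Scope Term}
    (hb : step κ b) (hc : step κ c)
    (s : Set (Config Graph Constraint Var Hole Scope Term)) :
    ∃ m', ReflTransGen (MStep step expand) (insert b s) m' ∧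
      ReflTransGen (MStep step expand) (insert c s) m' := by
  obtain ⟨d, hbd, hcd⟩ := hconf κ b c (ReflTransGen.single hb) (ReflTransGen.single hc)
  obtain ⟨Cb, hfinb, hbCb, hpropb⟩ := chain_run step expand hbd
  obtain ⟨Cc, hfinc, hcCc, hpropc⟩ := chain_run step expand hcd
  have hYfin : (Cb ∪ Cc).Finite := hfinb.union hfinc
  have hY : ∀ z ∈ Cb ∪ Cc, ∃ Cz, Cz ⊆ Cb ∪ Cc ∧ z ∈ Cz ∧
      ∀ T : Set (Config Graph Constraint Var Hole Scope Term), z ∈ T →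
        ReflTransGen (MStep step expand) T (insert d (T \ Cz)) := by
    rintro z (hz | hz)
    · obtain ⟨Cz, h1, h2, h3⟩ := hpropb z hz
      exact ⟨Cz, h1.trans Set.subset_union_left, h2, h3⟩
    · obtain ⟨Cz, h1, h2, h3⟩ := hpropc z hz
      exact ⟨Cz, h1.trans Set.subset_union_right, h2, h3⟩
  refine ⟨insert d (s \ (Cb ∪ Cc)), ?_, ?_⟩
  · obtain ⟨Cz, hsubz, hbCz, hrun⟩ := hpropb b hbCb
    have h1 := hrun (insert b s) (Set.mem_insert _ _)
    have h2 := sweep step expand hYfin hY (insert d (insert b s \ Cz)) (Set.mem_insert _ _)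
    have he : insert d (insert d (insert b s \ Cz) \ (Cb ∪ Cc))
        = insert d (s \ (Cb ∪ Cc)) := by
      ext x
      simp only [Set.mem_insert_iff, Set.mem_diff, Set.mem_union]
      have hs1 : x ∈ Cz → x ∈ Cb := fun h => hsubz h
      have hs2 : x = b → x ∈ Cb := fun h => h ▸ hbCb
      tauto
    exact h1.trans (he ▸ h2)
  · obtain ⟨Cz, hsubz, hcCz, hrun⟩ := hpropc c hcCc
    have h1 := hrun (insert c s) (Set.mem_insert _ _)
    have h2 := sweep step expand hYfin hY (insert d (insert c s \ Cz)) (Set.mem_insert _ _)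
    have he : insert d (insert d (insert c s \ Cz) \ (Cb ∪ Cc))
        = insert d (s \ (Cb ∪ Cc)) := by
      ext x
      simp only [Set.mem_insert_iff, Set.mem_diff, Set.mem_union]
      have hs1 : x ∈ Cz → x ∈ Cc := fun h => hsubz h
      have hs2 : x = c → x ∈ Cc := fun h => h ▸ hcCc
      tauto
    exact h1.trans (he ▸ h2)

end Auxiliary

/-- **Confluence of ↠**: if κ̄ ↠ κ̄₁ and κ̄ ↠ κ̄₂, then there exists κ̄' such
that κ̄₁ ↠* κ̄' and κ̄₂ ↠* κ̄'. -/
theorem mstep_confluent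
    (step expand : Config Graph Constraint Var Hole Scope Term →
      Config Graph Constraint Var Hole Scope Term → Prop)
    (hstep_confluent : ∀ κ κ₁ κ₂,
      ReflTransGen step κ κ₁ → ReflTransGen step κ κ₂ →
      ∃ κ', ReflTransGen step κ₁ κ' ∧ ReflTransGen step κ₂ κ')
    (m m₁ m₂ : Set (Config Graph Constraint Var Hole Scope Term))
    (h₁ : MStep step expand m m₁) (h₂ : MStep step expand m m₂) :
    ∃ m', ReflTransGen (MStep step expand) m₁ m' ∧
      ReflTransGen (MStep step expand) m₂ m' := by
  classical
  cases h₁ with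
  | @solve κ₁ b hk1 hs1 =>
    cases h₂ with
    | @solve κ₂ c hk2 hs2 =>
      by_cases hkk : κ₁ = κ₂
      · subst hkk
        exact join_same step expand hstep_confluent hs1 hs2 (m \ {κ₁})
      · have hk2' : κ₂ ∈ insert b (m \ {κ₁}) := by
          refine Set.mem_insert_of_mem _ ?_
          simp only [Set.mem_diff, Set.mem_singleton_iff]
          exact ⟨hk2, fun h => hkk h.symm⟩
        have hk1' : κ₁ ∈ insert c (m \ {κ₂}) := by
          refine Set.mem_insert_of_mem _ ?_
          simp only [Set.mem_diff, Set.mem_singleton_iff]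
          exact ⟨hk1, hkk⟩
        have st1 : MStep step expand (insert b (m \ {κ₁}))
            (insert c (insert b (m \ {κ₁}) \ {κ₂})) := MStep.solve hk2' hs2
        have st2 : MStep step expand (insert c (m \ {κ₂}))
            (insert b (insert c (m \ {κ₂}) \ {κ₁})) := MStep.solve hk1' hs1
        by_cases hb2 : b = κ₂
        · have hk2'' : κ₂ ∈ insert b (insert c (m \ {κ₂}) \ {κ₁}) := by
            rw [← hb2]; exact Set.mem_insert _ _
          have st3 : MStep step expand (insert b (insert c (m \ {κ₂}) \ {κ₁}))
              (insert c (insert b (insert c (m \ {κ₂}) \ {κ₁}) \ {κ₂})) :=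
            MStep.solve hk2'' hs2
          have he : insert c (insert b (insert c (m \ {κ₂}) \ {κ₁}) \ {κ₂})
              = insert c (insert b (m \ {κ₁}) \ {κ₂}) := by
            subst hb2
            ext x
            simp only [Set.mem_insert_iff, Set.mem_diff, Set.mem_singleton_iff]
            tauto
          exact ⟨_, ReflTransGen.single st1,
            ReflTransGen.head st2 (he ▸ ReflTransGen.single st3)⟩
        · by_cases hc1 : c = κ₁
          · have hk1'' : κ₁ ∈ insert c (insert b (m \ {κ₁}) \ {κ₂}) := by
              rw [← hc1]; exact Set.mem_insert _ _
            have st3 : MStep step expand (insert c (insert b (m \ {κ₁}) \ {κ₂}))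
                (insert b (insert c (insert b (m \ {κ₁}) \ {κ₂}) \ {κ₁})) :=
              MStep.solve hk1'' hs1
            have he : insert b (insert c (insert b (m \ {κ₁}) \ {κ₂}) \ {κ₁})
                = insert b (insert c (m \ {κ₂}) \ {κ₁}) := by
              subst hc1
              ext x
              simp only [Set.mem_insert_iff, Set.mem_diff, Set.mem_singleton_iff]
              tauto
            exact ⟨_, ReflTransGen.head st1 (he ▸ ReflTransGen.single st3),
              ReflTransGen.single st2⟩
          · have he : insert b (insert c (m \ {κ₂}) \ {κ₁})
                = insert c (insert b (m \ {κ₁}) \ {κ₂}) := by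
              ext x
              simp only [Set.mem_insert_iff, Set.mem_diff, Set.mem_singleton_iff]
              have hxb : x = b → ¬ x = κ₂ := fun h hx => hb2 (h.symm.trans hx)
              have hxc : x = c → ¬ x = κ₁ := fun h hx => hc1 (h.symm.trans hx)
              tauto
            exact ⟨_, ReflTransGen.single st1, he ▸ ReflTransGen.single st2⟩
    | @expand κ₂ hk2 hns2 hna2 =>
      -- κ₁ solves, κ₂ is stuck, hence κ₁ ≠ κ₂
      have hne : κ₁ ≠ κ₂ := fun h => hns2 b (h ▸ hs1)
      have hk2' : κ₂ ∈ insert b (m \ {κ₁}) := by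
        refine Set.mem_insert_of_mem _ ?_
        simp only [Set.mem_diff, Set.mem_singleton_iff]
        exact ⟨hk2, fun h => hne h.symm⟩
      have hk1' : κ₁ ∈ (m \ {κ₂}) ∪ {κ' | expand κ₂ κ'} := by
        refine Set.mem_union_left _ ?_
        simp only [Set.mem_diff, Set.mem_singleton_iff]
        exact ⟨hk1, hne⟩
      have st1 : MStep step expand (insert b (m \ {κ₁}))
          ((insert b (m \ {κ₁}) \ {κ₂}) ∪ {κ' | expand κ₂ κ'}) :=
        MStep.expand hk2' hns2 hna2
      have st2 : MStep step expand ((m \ {κ₂}) ∪ {κ' | expand κ₂ κ'})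
          (insert b (((m \ {κ₂}) ∪ {κ' | expand κ₂ κ'}) \ {κ₁})) :=
        MStep.solve hk1' hs1
      by_cases h1E : κ₁ ∈ {κ' | expand κ₂ κ'}
      · -- resolve: solve κ₁ once more on the expand-then-solve side's source
        have hk1'' : κ₁ ∈ (insert b (m \ {κ₁}) \ {κ₂}) ∪ {κ' | expand κ₂ κ'} :=
          Set.mem_union_right _ h1E
        have st3 : MStep step expand
            ((insert b (m \ {κ₁}) \ {κ₂}) ∪ {κ' | expand κ₂ κ'})
            (insert b (((insert b (m \ {κ₁}) \ {κ₂}) ∪ {κ' | expand κ₂ κ'}) \ {κ₁})) :=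
          MStep.solve hk1'' hs1
        have he : insert b (((insert b (m \ {κ₁}) \ {κ₂}) ∪ {κ' | expand κ₂ κ'}) \ {κ₁})
            = insert b (((m \ {κ₂}) ∪ {κ' | expand κ₂ κ'}) \ {κ₁}) := by
          ext x
          simp only [Set.mem_insert_iff, Set.mem_union, Set.mem_diff,
            Set.mem_singleton_iff, Set.mem_setOf_eq]
          tauto
        exact ⟨_, ReflTransGen.head st1 (he ▸ ReflTransGen.single st3),
          ReflTransGen.single st2⟩
      · by_cases h2T : b = κ₂ ∨ κ₂ ∈ {κ' | expand κ₂ κ'}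
        · -- resolve: expand κ₂ once more on the solve-then-expand side's target
          have hk2'' : κ₂ ∈ insert b (((m \ {κ₂}) ∪ {κ' | expand κ₂ κ'}) \ {κ₁}) := by
            rcases h2T with h | h
            · rw [← h]; exact Set.mem_insert _ _
            · refine Set.mem_insert_of_mem _ ?_
              simp only [Set.mem_diff, Set.mem_union, Set.mem_singleton_iff]
              exact ⟨Or.inr h, fun hx => hne hx.symm⟩
          have st3 : MStep step expand
              (insert b (((m \ {κ₂}) ∪ {κ' | expand κ₂ κ'}) \ {κ₁}))
              ((insert b (((m \ {κ₂}) ∪ {κ' | expand κ₂ κ'}) \ {κ₁}) \ {κ₂})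
                ∪ {κ' | expand κ₂ κ'}) :=
            MStep.expand hk2'' hns2 hna2
          have he : (insert b (((m \ {κ₂}) ∪ {κ' | expand κ₂ κ'}) \ {κ₁}) \ {κ₂})
                ∪ {κ' | expand κ₂ κ'}
              = (insert b (m \ {κ₁}) \ {κ₂}) ∪ {κ' | expand κ₂ κ'} := by
            ext x
            simp only [Set.mem_insert_iff, Set.mem_union, Set.mem_diff,
              Set.mem_singleton_iff, Set.mem_setOf_eq]
            tauto
          exact ⟨_, ReflTransGen.single st1,
            ReflTransGen.head st2 (he ▸ ReflTransGen.single st3)⟩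
        · push_neg at h2T
          obtain ⟨hb2, h2E⟩ := h2T
          have he : insert b (((m \ {κ₂}) ∪ {κ' | expand κ₂ κ'}) \ {κ₁})
              = (insert b (m \ {κ₁}) \ {κ₂}) ∪ {κ' | expand κ₂ κ'} := by
            ext x
            simp only [Set.mem_insert_iff, Set.mem_union, Set.mem_diff,
              Set.mem_singleton_iff, Set.mem_setOf_eq]
            have hxb : x = b → ¬ x = κ₂ := fun h hx => hb2 (h.symm.trans hx)
            have hx1 : x = κ₁ → ¬ expand κ₂ x := fun h hx => h1E (h ▸ hx)
            have hx2 : x = κ₂ → ¬ expand κ₂ x := fun h hx => h2E (h ▸ hx)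
            tauto
          exact ⟨_, ReflTransGen.single st1, he ▸ ReflTransGen.single st2⟩
  | @expand κ₁ hk1 hns1 hna1 =>
    cases h₂ with
    | @solve κ₂ c hk2 hs2 =>
      -- mirror of the solve/expand case
      have hne : κ₂ ≠ κ₁ := fun h => hns1 c (h ▸ hs2)
      have hk1' : κ₁ ∈ insert c (m \ {κ₂}) := by
        refine Set.mem_insert_of_mem _ ?_
        simp only [Set.mem_diff, Set.mem_singleton_iff]
        exact ⟨hk1, fun h => hne h.symm⟩
      have hk2' : κ₂ ∈ (m \ {κ₁}) ∪ {κ' | expand κ₁ κ'} := by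
        refine Set.mem_union_left _ ?_
        simp only [Set.mem_diff, Set.mem_singleton_iff]
        exact ⟨hk2, hne⟩
      have st2 : MStep step expand (insert c (m \ {κ₂}))
          ((insert c (m \ {κ₂}) \ {κ₁}) ∪ {κ' | expand κ₁ κ'}) :=
        MStep.expand hk1' hns1 hna1
      have st1 : MStep step expand ((m \ {κ₁}) ∪ {κ' | expand κ₁ κ'})
          (insert c (((m \ {κ₁}) ∪ {κ' | expand κ₁ κ'}) \ {κ₂})) :=
        MStep.solve hk2' hs2
      by_cases h1E : κ₂ ∈ {κ' | expand κ₁ κ'}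
      · have hk2'' : κ₂ ∈ (insert c (m \ {κ₂}) \ {κ₁}) ∪ {κ' | expand κ₁ κ'} :=
          Set.mem_union_right _ h1E
        have st3 : MStep step expand
            ((insert c (m \ {κ₂}) \ {κ₁}) ∪ {κ' | expand κ₁ κ'})
            (insert c (((insert c (m \ {κ₂}) \ {κ₁}) ∪ {κ' | expand κ₁ κ'}) \ {κ₂})) :=
          MStep.solve hk2'' hs2
        have he : insert c (((insert c (m \ {κ₂}) \ {κ₁}) ∪ {κ' | expand κ₁ κ'}) \ {κ₂})
            = insert c (((m \ {κ₁}) ∪ {κ' | expand κ₁ κ'}) \ {κ₂}) := by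
          ext x
          simp only [Set.mem_insert_iff, Set.mem_union, Set.mem_diff,
            Set.mem_singleton_iff, Set.mem_setOf_eq]
          tauto
        exact ⟨_, ReflTransGen.single st1,
          ReflTransGen.head st2 (he ▸ ReflTransGen.single st3)⟩
      · by_cases h2T : c = κ₁ ∨ κ₁ ∈ {κ' | expand κ₁ κ'}
        · have hk1'' : κ₁ ∈ insert c (((m \ {κ₁}) ∪ {κ' | expand κ₁ κ'}) \ {κ₂}) := by
            rcases h2T with h | h
            · rw [← h]; exact Set.mem_insert _ _
            · refine Set.mem_insert_of_mem _ ?_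
              simp only [Set.mem_diff, Set.mem_union, Set.mem_singleton_iff]
              exact ⟨Or.inr h, fun hx => hne hx.symm⟩
          have st3 : MStep step expand
              (insert c (((m \ {κ₁}) ∪ {κ' | expand κ₁ κ'}) \ {κ₂}))
              ((insert c (((m \ {κ₁}) ∪ {κ' | expand κ₁ κ'}) \ {κ₂}) \ {κ₁})
                ∪ {κ' | expand κ₁ κ'}) :=
            MStep.expand hk1'' hns1 hna1
          have he : (insert c (((m \ {κ₁}) ∪ {κ' | expand κ₁ κ'}) \ {κ₂}) \ {κ₁})
                ∪ {κ' | expand κ₁ κ'}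
              = (insert c (m \ {κ₂}) \ {κ₁}) ∪ {κ' | expand κ₁ κ'} := by
            ext x
            simp only [Set.mem_insert_iff, Set.mem_union, Set.mem_diff,
              Set.mem_singleton_iff, Set.mem_setOf_eq]
            tauto
          exact ⟨_, ReflTransGen.head st1 (he ▸ ReflTransGen.single st3),
            ReflTransGen.single st2⟩
        · push_neg at h2T
          obtain ⟨hc1, h2E⟩ := h2T
          have he : insert c (((m \ {κ₁}) ∪ {κ' | expand κ₁ κ'}) \ {κ₂})
              = (insert c (m \ {κ₂}) \ {κ₁}) ∪ {κ' | expand κ₁ κ'} := by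
            ext x
            simp only [Set.mem_insert_iff, Set.mem_union, Set.mem_diff,
              Set.mem_singleton_iff, Set.mem_setOf_eq]
            have hxc : x = c → ¬ x = κ₁ := fun h hx => hc1 (h.symm.trans hx)
            have hx1 : x = κ₂ → ¬ expand κ₁ x := fun h hx => h1E (h ▸ hx)
            have hx2 : x = κ₁ → ¬ expand κ₁ x := fun h hx => h2E (h ▸ hx)
            tauto
          exact ⟨_, he ▸ ReflTransGen.single st1, ReflTransGen.single st2⟩
    | @expand κ₂ hk2 hns2 hna2 =>
      by_cases hkk : κ₁ = κ₂
      · subst hkk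
        exact ⟨_, ReflTransGen.refl, ReflTransGen.refl⟩
      · have hk2' : κ₂ ∈ (m \ {κ₁}) ∪ {κ' | expand κ₁ κ'} := by
          refine Set.mem_union_left _ ?_
          simp only [Set.mem_diff, Set.mem_singleton_iff]
          exact ⟨hk2, fun h => hkk h.symm⟩
        have hk1' : κ₁ ∈ (m \ {κ₂}) ∪ {κ' | expand κ₂ κ'} := by
          refine Set.mem_union_left _ ?_
          simp only [Set.mem_diff, Set.mem_singleton_iff]
          exact ⟨hk1, hkk⟩
        have st1 : MStep step expand ((m \ {κ₁}) ∪ {κ' | expand κ₁ κ'})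
            ((((m \ {κ₁}) ∪ {κ' | expand κ₁ κ'}) \ {κ₂}) ∪ {κ' | expand κ₂ κ'}) :=
          MStep.expand hk2' hns2 hna2
        have st2 : MStep step expand ((m \ {κ₂}) ∪ {κ' | expand κ₂ κ'})
            ((((m \ {κ₂}) ∪ {κ' | expand κ₂ κ'}) \ {κ₁}) ∪ {κ' | expand κ₁ κ'}) :=
          MStep.expand hk1' hns1 hna1
        by_cases h1F : κ₁ ∈ {κ' | expand κ₂ κ'}
        · have hk1'' : κ₁ ∈ (((m \ {κ₁}) ∪ {κ' | expand κ₁ κ'}) \ {κ₂})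
              ∪ {κ' | expand κ₂ κ'} := Set.mem_union_right _ h1F
          have st3 : MStep step expand
              ((((m \ {κ₁}) ∪ {κ' | expand κ₁ κ'}) \ {κ₂}) ∪ {κ' | expand κ₂ κ'})
              (((((((m \ {κ₁}) ∪ {κ' | expand κ₁ κ'}) \ {κ₂}) ∪ {κ' | expand κ₂ κ'}))
                \ {κ₁}) ∪ {κ' | expand κ₁ κ'}) :=
            MStep.expand hk1'' hns1 hna1
          have he : (((((m \ {κ₁}) ∪ {κ' | expand κ₁ κ'}) \ {κ₂}) ∪ {κ' | expand κ₂ κ'})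
                \ {κ₁}) ∪ {κ' | expand κ₁ κ'}
              = (((m \ {κ₂}) ∪ {κ' | expand κ₂ κ'}) \ {κ₁}) ∪ {κ' | expand κ₁ κ'} := by
            ext x
            simp only [Set.mem_insert_iff, Set.mem_union, Set.mem_diff,
              Set.mem_singleton_iff, Set.mem_setOf_eq]
            tauto
          exact ⟨_, ReflTransGen.head st1 (he ▸ ReflTransGen.single st3),
            ReflTransGen.single st2⟩
        · by_cases h2E : κ₂ ∈ {κ' | expand κ₁ κ'}
          · have hk2'' : κ₂ ∈ (((m \ {κ₂}) ∪ {κ' | expand κ₂ κ'}) \ {κ₁})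
                ∪ {κ' | expand κ₁ κ'} := Set.mem_union_right _ h2E
            have st3 : MStep step expand
                ((((m \ {κ₂}) ∪ {κ' | expand κ₂ κ'}) \ {κ₁}) ∪ {κ' | expand κ₁ κ'})
                (((((((m \ {κ₂}) ∪ {κ' | expand κ₂ κ'}) \ {κ₁}) ∪ {κ' | expand κ₁ κ'}))
                  \ {κ₂}) ∪ {κ' | expand κ₂ κ'}) :=
              MStep.expand hk2'' hns2 hna2
            have he : (((((m \ {κ₂}) ∪ {κ' | expand κ₂ κ'}) \ {κ₁}) ∪ {κ' | expand κ₁ κ'})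
                  \ {κ₂}) ∪ {κ' | expand κ₂ κ'}
                = (((m \ {κ₁}) ∪ {κ' | expand κ₁ κ'}) \ {κ₂}) ∪ {κ' | expand κ₂ κ'} := by
              ext x
              simp only [Set.mem_insert_iff, Set.mem_union, Set.mem_diff,
                Set.mem_singleton_iff, Set.mem_setOf_eq]
              tauto
            exact ⟨_, ReflTransGen.single st1,
              ReflTransGen.head st2 (he ▸ ReflTransGen.single st3)⟩
          · have he : (((m \ {κ₂}) ∪ {κ' | expand κ₂ κ'}) \ {κ₁}) ∪ {κ' | expand κ₁ κ'}
                = (((m \ {κ₁}) ∪ {κ' | expand κ₁ κ'}) \ {κ₂}) ∪ {κ' | expand κ₂ κ'} := by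
              ext x
              simp only [Set.mem_insert_iff, Set.mem_union, Set.mem_diff,
                Set.mem_singleton_iff, Set.mem_setOf_eq]
              have hx1 : x = κ₁ → ¬ expand κ₂ x := fun h hx => h1F (h ▸ hx)
              have hx2 : x = κ₂ → ¬ expand κ₁ x := fun h hx => h2E (h ▸ hx)
              tauto
            exact ⟨_, ReflTransGen.single st1, he ▸ ReflTransGen.single st2⟩
end

section
/- Abstract confluence of solve-or-expand systems: let R be a confluent step relation on a type of states, Acc a predicate on states, and expand a function assigning to each R-normal (stuck) state not satisfying Acc the set of all its speculative expansions. Define a relation S on finite collections of states by: (Solve) a collection steps by replacing one element a with some b where R a b, or (Expand) a collection steps by replacing one R-normal element a with ¬Acc a by the entire set expand(a). Then S is confluent: if m S m₁ and m S m₂, there exists m' with m₁ S* m' and m₂ S* m'. (This is the abstract content of the paper's Confluence theorem, whose proof uses only that steps on distinct elements commute, that Expand is deterministic because it takes all expansions at once, and that Solve and Expand never apply to the same element since Expand requires R-stuckness.) -/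
/-!
Statement 9: Abstract confluence of solve-or-expand systems.

`R` is a confluent step relation on a type `α` of states, `Acc` an acceptance
predicate, and `expand` a function assigning to each state its set of
speculative expansions (only used on R-normal, non-accepting states).
Collections of states are finite sets over `α`. The relation `S`
(`SolveOrExpand`) either replaces one element `a` by some `b` with `R a b`
(Solve), or replaces one R-normal element `a` with `¬ Acc a` by the entire set
`expand a` (Expand). Then `S` is confluent.
-/

open Relation

variable {α : Type*}

/-- The solve-or-expand relation on finite collections of states:
(Solve) replace one element `a` by some `b` with `R a b`;
(Expand) replace one `R`-normal (stuck) element `a` not satisfying `Acc`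
by the entire set `expand a` of its speculative expansions. -/
inductive SolveOrExpand [DecidableEq α] (R : α → α → Prop) (Acc : α → Prop)
    (expand : α → Finset α) : Finset α → Finset α → Prop
  | solve {m : Finset α} {a b : α} :
      a ∈ m → R a b → SolveOrExpand R Acc expand m (insert b (m.erase a))
  | expand {m : Finset α} {a : α} :
      a ∈ m → (∀ b, ¬ R a b) → ¬ Acc a →
      SolveOrExpand R Acc expand m (m.erase a ∪ expand a)

section AuxConfluence
open scoped Classical

variable [DecidableEq α] {R : α → α → Prop} {Acc : α → Prop} {expand : α → Finset α}

lemma tokenRun {a c : α} (h : ReflTransGen R a c) :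
    ∀ s : Finset α, a ∈ s → ∃ P : Finset α, a ∈ P ∧ (∀ x ∈ P, ReflTransGen R x c) ∧
      ReflTransGen (SolveOrExpand R Acc expand) s (insert c (s \ P)) := by
  induction h using ReflTransGen.head_induction_on with
  | refl =>
    intro s hs
    refine ⟨{c}, by simp, by simp +contextual [ReflTransGen.refl], ?_⟩
    have : insert c (s \ {c}) = s := by
      ext y
      rcases eq_or_ne y c with rfl | hy
      · simp [hs]
      · simp [hy]
    rw [this]
  | head hab _h ih =>
    rename_i a b
    intro s hs
    obtain ⟨P, hbP, hP, hrun⟩ := ih (insert b (s.erase a)) (Finset.mem_insert_self _ _)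
    refine ⟨insert a P, Finset.mem_insert_self _ _, ?_, ?_⟩
    · intro x hx
      rcases Finset.mem_insert.1 hx with rfl | hx
      · exact ReflTransGen.head hab _h
      · exact hP x hx
    · have step : SolveOrExpand R Acc expand s (insert b (s.erase a)) :=
        SolveOrExpand.solve hs hab
      have : insert b (s.erase a) \ P = s \ insert a P := by
        ext y; simp only [Finset.mem_sdiff, Finset.mem_insert, Finset.mem_erase]
        constructor
        · rintro ⟨rfl | ⟨hya, hys⟩, hyP⟩
          · exact absurd hbP hyP
          · exact ⟨hys, by tauto⟩
        · rintro ⟨hys, h⟩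
          push_neg at h
          exact ⟨Or.inr ⟨h.1, hys⟩, h.2⟩
      rw [this] at hrun
      exact ReflTransGen.head step hrun

lemma normalizeRun {c : α} :
    ∀ (n : ℕ) (s : Finset α) (a : α),
      ((s.filter (fun x => ReflTransGen R x c)).erase c).card ≤ n →
      a ∈ s → ReflTransGen R a c →
      ReflTransGen (SolveOrExpand R Acc expand) s
        (insert c (s.filter (fun x => ¬ ReflTransGen R x c))) := by
  intro n
  induction n with
  | zero =>
    intro s a hcard ha hac
    have hnone : ∀ x ∈ s, ReflTransGen R x c → x = c := by
      intro x hx hxc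
      by_contra hne
      have : x ∈ (s.filter (fun x => ReflTransGen R x c)).erase c := by
        simp [Finset.mem_erase, hne, hx, hxc]
      have := Finset.card_pos.2 ⟨x, this⟩
      omega
    have hcs : c ∈ s := hnone a ha hac ▸ ha
    have : insert c (s.filter (fun x => ¬ ReflTransGen R x c)) = s := by
      ext y
      simp only [Finset.mem_insert, Finset.mem_filter]
      constructor
      · rintro (rfl | ⟨hy, _⟩) <;> [exact hcs; exact hy]
      · intro hy
        by_cases hyc : ReflTransGen R y c
        · exact Or.inl (hnone y hy hyc)
        · exact Or.inr ⟨hy, hyc⟩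
    rw [this]
  | succ n ih =>
    intro s a hcard ha hac
    by_cases hex : ∃ x ∈ s, ReflTransGen R x c ∧ x ≠ c
    · obtain ⟨x, hx, hxc, hxne⟩ := hex
      obtain ⟨P, hxP, hP, hrun⟩ := tokenRun (Acc := Acc) (expand := expand) hxc s hx
      set s' : Finset α := insert c (s \ P) with hs'
      have hmeas : ((s'.filter (fun y => ReflTransGen R y c)).erase c).card ≤ n := by
        have hsub : (s'.filter (fun y => ReflTransGen R y c)).erase c ⊆
            ((s.filter (fun y => ReflTransGen R y c)).erase c).erase x := by
          intro y hy
          simp only [Finset.mem_erase, Finset.mem_filter, hs', Finset.mem_insert,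
            Finset.mem_sdiff] at hy ⊢
          obtain ⟨hyc, hys, hyR⟩ := hy
          rcases hys with rfl | ⟨hys, hyP⟩
          · exact absurd rfl hyc
          · exact ⟨fun h => hyP (h ▸ hxP), hyc, hys, hyR⟩
        have hxmem : x ∈ (s.filter (fun y => ReflTransGen R y c)).erase c := by
          simp [Finset.mem_erase, hxne, hx, hxc]
        have := Finset.card_le_card hsub
        have := Finset.card_erase_of_mem hxmem
        omega
      have hfin := ih s' c hmeas (Finset.mem_insert_self _ _) ReflTransGen.refl
      have heq : s'.filter (fun y => ¬ ReflTransGen R y c) =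
          s.filter (fun y => ¬ ReflTransGen R y c) := by
        ext y
        simp only [Finset.mem_filter, hs', Finset.mem_insert, Finset.mem_sdiff]
        constructor
        · rintro ⟨rfl | ⟨hys, _⟩, hyR⟩
          · exact absurd ReflTransGen.refl hyR
          · exact ⟨hys, hyR⟩
        · rintro ⟨hys, hyR⟩
          exact ⟨Or.inr ⟨hys, fun hyP => hyR (hP y hyP)⟩, hyR⟩
      rw [heq] at hfin
      exact hrun.trans hfin
    · push_neg at hex
      have hnone : ∀ x ∈ s, ReflTransGen R x c → x = c := by
        intro x hx hxc
        by_contra hne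
        exact hne (by by_contra h; exact h ((hex x hx hxc) ▸ rfl)) 
      have hceq : a = c := hnone a ha hac
      have hcs : c ∈ s := hceq ▸ ha
      have : insert c (s.filter (fun x => ¬ ReflTransGen R x c)) = s := by
        ext y
        simp only [Finset.mem_insert, Finset.mem_filter]
        constructor
        · rintro (rfl | ⟨hy, _⟩) <;> [exact hcs; exact hy]
        · intro hy
          by_cases hyc : ReflTransGen R y c
          · exact Or.inl (hnone y hy hyc)
          · exact Or.inr ⟨hy, hyc⟩
      rw [this]

lemma solve_solve_join
    (hR_confluent : ∀ a b₁ b₂, ReflTransGen R a b₁ → ReflTransGen R a b₂ →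
      ∃ c, ReflTransGen R b₁ c ∧ ReflTransGen R b₂ c)
    {m : Finset α} {a₁ b₁ a₂ b₂ : α}
    (ha₁ : a₁ ∈ m) (hab₁ : R a₁ b₁) (ha₂ : a₂ ∈ m) (hab₂ : R a₂ b₂) :
    ∃ m', ReflTransGen (SolveOrExpand R Acc expand) (insert b₁ (m.erase a₁)) m' ∧
      ReflTransGen (SolveOrExpand R Acc expand) (insert b₂ (m.erase a₂)) m' := by
  by_cases haa : a₁ = a₂
  · subst haa
    obtain ⟨c, hc₁, hc₂⟩ := hR_confluent a₁ b₁ b₂ (ReflTransGen.single hab₁)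
      (ReflTransGen.single hab₂)
    have key : ∀ b : α, ReflTransGen R b c →
        (insert b (m.erase a₁)).filter (fun x => ¬ ReflTransGen R x c) =
          (m.erase a₁).filter (fun x => ¬ ReflTransGen R x c) := by
      intro b hb
      ext y
      simp only [Finset.mem_filter, Finset.mem_insert]
      constructor
      · rintro ⟨rfl | hy, hyR⟩
        · exact absurd hb hyR
        · exact ⟨hy, hyR⟩
      · rintro ⟨hy, hyR⟩; exact ⟨Or.inr hy, hyR⟩
    refine ⟨insert c ((m.erase a₁).filter (fun x => ¬ ReflTransGen R x c)), ?_, ?_⟩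
    · have := normalizeRun (Acc := Acc) (expand := expand)
        ((((insert b₁ (m.erase a₁)).filter (fun x => ReflTransGen R x c)).erase c).card)
        (insert b₁ (m.erase a₁)) b₁ le_rfl (Finset.mem_insert_self _ _) hc₁
      rwa [key b₁ hc₁] at this
    · have := normalizeRun (Acc := Acc) (expand := expand)
        ((((insert b₂ (m.erase a₁)).filter (fun x => ReflTransGen R x c)).erase c).card)
        (insert b₂ (m.erase a₁)) b₂ le_rfl (Finset.mem_insert_self _ _) hc₂
      rwa [key b₂ hc₂] at this
  · -- distinct redexes
    have ha₂' : a₂ ∈ insert b₁ (m.erase a₁) :=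
      Finset.mem_insert_of_mem (Finset.mem_erase.2 ⟨fun h => haa h.symm, ha₂⟩)
    have ha₁' : a₁ ∈ insert b₂ (m.erase a₂) :=
      Finset.mem_insert_of_mem (Finset.mem_erase.2 ⟨haa, ha₁⟩)
    have step₁ : SolveOrExpand R Acc expand (insert b₁ (m.erase a₁))
        (insert b₂ ((insert b₁ (m.erase a₁)).erase a₂)) := SolveOrExpand.solve ha₂' hab₂
    have step₂ : SolveOrExpand R Acc expand (insert b₂ (m.erase a₂))
        (insert b₁ ((insert b₂ (m.erase a₂)).erase a₁)) := SolveOrExpand.solve ha₁' hab₁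
    by_cases hb₁ : b₁ = a₂
    · -- token b₁ merged with redex a₂ : one more solve step on the right
      refine ⟨insert b₂ ((insert b₁ (m.erase a₁)).erase a₂), ReflTransGen.single step₁, ?_⟩
      have ha₂'' : a₂ ∈ insert b₁ ((insert b₂ (m.erase a₂)).erase a₁) := by
        rw [hb₁]; exact Finset.mem_insert_self _ _
      have step₃ : SolveOrExpand R Acc expand (insert b₁ ((insert b₂ (m.erase a₂)).erase a₁))
          (insert b₂ ((insert b₁ ((insert b₂ (m.erase a₂)).erase a₁)).erase a₂)) :=
        SolveOrExpand.solve ha₂'' hab₂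
      have heq : insert b₂ ((insert b₁ ((insert b₂ (m.erase a₂)).erase a₁)).erase a₂) =
          insert b₂ ((insert b₁ (m.erase a₁)).erase a₂) := by
        subst hb₁
        ext y
        by_cases hy1 : y = a₁ <;> by_cases hy2 : y = b₁ <;> by_cases hy3 : y = b₂ <;>
          simp_all
      rw [heq] at step₃
      exact (ReflTransGen.single step₂).tail step₃
    · by_cases hb₂ : b₂ = a₁
      · -- symmetric merge : one more solve step on the left
        refine ⟨insert b₁ ((insert b₂ (m.erase a₂)).erase a₁), ?_, ReflTransGen.single step₂⟩
        have ha₁'' : a₁ ∈ insert b₂ ((insert b₁ (m.erase a₁)).erase a₂) := by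
          rw [hb₂]; exact Finset.mem_insert_self _ _
        have step₃ : SolveOrExpand R Acc expand (insert b₂ ((insert b₁ (m.erase a₁)).erase a₂))
            (insert b₁ ((insert b₂ ((insert b₁ (m.erase a₁)).erase a₂)).erase a₁)) :=
          SolveOrExpand.solve ha₁'' hab₁
        have heq : insert b₁ ((insert b₂ ((insert b₁ (m.erase a₁)).erase a₂)).erase a₁) =
            insert b₁ ((insert b₂ (m.erase a₂)).erase a₁) := by
          subst hb₂
          ext y
          by_cases hy1 : y = a₂ <;> by_cases hy2 : y = b₁ <;> by_cases hy3 : y = b₂ <;>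
            simp_all
        rw [heq] at step₃
        exact (ReflTransGen.single step₁).tail step₃
      · -- fully disjoint : the two steps commute on the nose
        refine ⟨insert b₂ ((insert b₁ (m.erase a₁)).erase a₂), ReflTransGen.single step₁, ?_⟩
        have heq : insert b₁ ((insert b₂ (m.erase a₂)).erase a₁) =
            insert b₂ ((insert b₁ (m.erase a₁)).erase a₂) := by
          ext y
          by_cases hy1 : y = a₁ <;> by_cases hy2 : y = a₂ <;> by_cases hy3 : y = b₁ <;>
            by_cases hy4 : y = b₂ <;> simp_all
        rw [heq] at step₂
        exact ReflTransGen.single step₂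

lemma solve_expand_join {m : Finset α} {a₁ b a₂ : α}
    (ha₁ : a₁ ∈ m) (hab : R a₁ b)
    (ha₂ : a₂ ∈ m) (hst : ∀ y, ¬ R a₂ y) (hac : ¬ Acc a₂) :
    ∃ m', ReflTransGen (SolveOrExpand R Acc expand) (insert b (m.erase a₁)) m' ∧
      ReflTransGen (SolveOrExpand R Acc expand) (m.erase a₂ ∪ expand a₂) m' := by
  have haa : a₁ ≠ a₂ := fun h => hst b (h ▸ hab)
  have ha₂' : a₂ ∈ insert b (m.erase a₁) :=
    Finset.mem_insert_of_mem (Finset.mem_erase.2 ⟨fun h => haa h.symm, ha₂⟩)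
  have ha₁' : a₁ ∈ m.erase a₂ ∪ expand a₂ :=
    Finset.mem_union_left _ (Finset.mem_erase.2 ⟨haa, ha₁⟩)
  -- Y₁ : expand a₂ after the solve step; Y₂ : solve a₁ after the expand step
  have step₁ : SolveOrExpand R Acc expand (insert b (m.erase a₁))
      ((insert b (m.erase a₁)).erase a₂ ∪ expand a₂) :=
    SolveOrExpand.expand ha₂' hst hac
  have step₂ : SolveOrExpand R Acc expand (m.erase a₂ ∪ expand a₂)
      (insert b ((m.erase a₂ ∪ expand a₂).erase a₁)) := SolveOrExpand.solve ha₁' hab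
  by_cases hIn : a₁ ∈ (insert b (m.erase a₁)).erase a₂ ∪ expand a₂
  · -- extra solve step of a₁ from Y₁ reaches Y₂
    refine ⟨insert b ((m.erase a₂ ∪ expand a₂).erase a₁), ?_, ReflTransGen.single step₂⟩
    have step₃ : SolveOrExpand R Acc expand ((insert b (m.erase a₁)).erase a₂ ∪ expand a₂)
        (insert b (((insert b (m.erase a₁)).erase a₂ ∪ expand a₂).erase a₁)) :=
      SolveOrExpand.solve hIn hab
    have heq : insert b (((insert b (m.erase a₁)).erase a₂ ∪ expand a₂).erase a₁) =
        insert b ((m.erase a₂ ∪ expand a₂).erase a₁) := by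
      ext y
      by_cases hy1 : y = a₁ <;> by_cases hy2 : y = a₂ <;> by_cases hy3 : y = b <;> simp_all
    rw [heq] at step₃
    exact (ReflTransGen.single step₁).tail step₃
  · by_cases hb : b = a₂
    · -- token merged with the stuck redex : extra expand step from Y₂
      refine ⟨(insert b (m.erase a₁)).erase a₂ ∪ expand a₂, ReflTransGen.single step₁, ?_⟩
      have ha₂'' : a₂ ∈ insert b ((m.erase a₂ ∪ expand a₂).erase a₁) := by
        rw [hb]; exact Finset.mem_insert_self _ _
      have step₃ : SolveOrExpand R Acc expand (insert b ((m.erase a₂ ∪ expand a₂).erase a₁))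
          ((insert b ((m.erase a₂ ∪ expand a₂).erase a₁)).erase a₂ ∪ expand a₂) :=
        SolveOrExpand.expand ha₂'' hst hac
      have heq : (insert b ((m.erase a₂ ∪ expand a₂).erase a₁)).erase a₂ ∪ expand a₂ =
          (insert b (m.erase a₁)).erase a₂ ∪ expand a₂ := by
        have hbe : a₁ ∉ expand a₂ := by
          intro h; exact hIn (Finset.mem_union_right _ h)
        subst hb
        ext y
        by_cases hy1 : y = a₁ <;> by_cases hy2 : y = b <;> simp_all
      rw [heq] at step₃
      exact (ReflTransGen.single step₂).tail step₃
    · -- no interaction : the two results coincide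
      refine ⟨(insert b (m.erase a₁)).erase a₂ ∪ expand a₂, ReflTransGen.single step₁, ?_⟩
      have hbe : a₁ ∉ expand a₂ := fun h => hIn (Finset.mem_union_right _ h)
      have hba : b ≠ a₁ := fun h => hIn (Finset.mem_union_left _
        (Finset.mem_erase.2 ⟨haa, by subst h; exact Finset.mem_insert_self _ _⟩))
      have heq : insert b ((m.erase a₂ ∪ expand a₂).erase a₁) =
          (insert b (m.erase a₁)).erase a₂ ∪ expand a₂ := by
        ext y
        by_cases hy1 : y = a₁ <;> by_cases hy2 : y = a₂ <;> by_cases hy3 : y = b <;> simp_all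
      rw [heq] at step₂
      exact ReflTransGen.single step₂

lemma expand_expand_join {m : Finset α} {a₁ a₂ : α}
    (ha₁ : a₁ ∈ m) (hst₁ : ∀ y, ¬ R a₁ y) (hac₁ : ¬ Acc a₁)
    (ha₂ : a₂ ∈ m) (hst₂ : ∀ y, ¬ R a₂ y) (hac₂ : ¬ Acc a₂) :
    ∃ m', ReflTransGen (SolveOrExpand R Acc expand) (m.erase a₁ ∪ expand a₁) m' ∧
      ReflTransGen (SolveOrExpand R Acc expand) (m.erase a₂ ∪ expand a₂) m' := by
  by_cases haa : a₁ = a₂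
  · subst haa; exact ⟨_, ReflTransGen.refl, ReflTransGen.refl⟩
  have ha₂' : a₂ ∈ m.erase a₁ ∪ expand a₁ :=
    Finset.mem_union_left _ (Finset.mem_erase.2 ⟨fun h => haa h.symm, ha₂⟩)
  have ha₁' : a₁ ∈ m.erase a₂ ∪ expand a₂ :=
    Finset.mem_union_left _ (Finset.mem_erase.2 ⟨haa, ha₁⟩)
  have step₁ : SolveOrExpand R Acc expand (m.erase a₁ ∪ expand a₁)
      ((m.erase a₁ ∪ expand a₁).erase a₂ ∪ expand a₂) := SolveOrExpand.expand ha₂' hst₂ hac₂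
  have step₂ : SolveOrExpand R Acc expand (m.erase a₂ ∪ expand a₂)
      ((m.erase a₂ ∪ expand a₂).erase a₁ ∪ expand a₁) := SolveOrExpand.expand ha₁' hst₁ hac₁
  set X₁ := (m.erase a₁ ∪ expand a₁).erase a₂ ∪ expand a₂ with hX₁
  set X₂ := (m.erase a₂ ∪ expand a₂).erase a₁ ∪ expand a₁ with hX₂
  by_cases h₂ : a₂ ∈ X₂
  · -- an extra expand of a₂ from X₂ reaches X₁
    refine ⟨X₁, ReflTransGen.single step₁, ?_⟩
    have step₃ : SolveOrExpand R Acc expand X₂ (X₂.erase a₂ ∪ expand a₂) :=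
      SolveOrExpand.expand h₂ hst₂ hac₂
    have heq : X₂.erase a₂ ∪ expand a₂ = X₁ := by
      rw [hX₁, hX₂]
      ext y
      by_cases hy1 : y = a₁ <;> by_cases hy2 : y = a₂ <;> simp_all <;> tauto
    rw [heq] at step₃
    exact (ReflTransGen.single step₂).tail step₃
  · by_cases h₁ : a₁ ∈ X₁
    · refine ⟨X₂, ?_, ReflTransGen.single step₂⟩
      have step₃ : SolveOrExpand R Acc expand X₁ (X₁.erase a₁ ∪ expand a₁) :=
        SolveOrExpand.expand h₁ hst₁ hac₁
      have h₂E₁ : a₂ ∉ expand a₁ := fun h => h₂ (Finset.mem_union_right _ h)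
      have h₂E₂ : a₂ ∉ expand a₂ := fun h => h₂ (Finset.mem_union_left _
        (Finset.mem_erase.2 ⟨fun h' => haa h'.symm, Finset.mem_union_right _ h⟩))
      have heq : X₁.erase a₁ ∪ expand a₁ = X₂ := by
        rw [hX₁, hX₂]
        ext y
        by_cases hy1 : y = a₁ <;> by_cases hy2 : y = a₂ <;> simp_all <;> tauto
      rw [heq] at step₃
      exact (ReflTransGen.single step₁).tail step₃
    · -- no interaction : X₁ = X₂
      refine ⟨X₁, ReflTransGen.single step₁, ?_⟩
      have h₂E₁ : a₂ ∉ expand a₁ := fun h => h₂ (Finset.mem_union_right _ h)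
      have h₂E₂ : a₂ ∉ expand a₂ := fun h => h₂ (Finset.mem_union_left _
        (Finset.mem_erase.2 ⟨fun h' => haa h'.symm, Finset.mem_union_right _ h⟩))
      have h₁E₂ : a₁ ∉ expand a₂ := fun h => h₁ (Finset.mem_union_right _ h)
      have h₁E₁ : a₁ ∉ expand a₁ := fun h => h₁ (Finset.mem_union_left _
        (Finset.mem_erase.2 ⟨haa, Finset.mem_union_right _ h⟩))
      have heq : X₂ = X₁ := by
        rw [hX₁, hX₂]
        ext y
        by_cases hy1 : y = a₁ <;> by_cases hy2 : y = a₂ <;> simp_all <;> tauto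
      rw [heq] at step₂
      exact ReflTransGen.single step₂

end AuxConfluence

/-- **Abstract confluence of solve-or-expand systems**: if `R` is confluent,
then the relation `S = SolveOrExpand R Acc expand` on finite collections of
states is confluent: whenever `m S m₁` and `m S m₂`, there exists `m'` with
`m₁ S* m'` and `m₂ S* m'`. -/
theorem solveOrExpand_confluent [DecidableEq α]
    (R : α → α → Prop) (Acc : α → Prop) (expand : α → Finset α)
    (hR_confluent : ∀ a b₁ b₂, ReflTransGen R a b₁ → ReflTransGen R a b₂ →
      ∃ c, ReflTransGen R b₁ c ∧ ReflTransGen R b₂ c)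
    (m m₁ m₂ : Finset α)
    (h₁ : SolveOrExpand R Acc expand m m₁)
    (h₂ : SolveOrExpand R Acc expand m m₂) :
    ∃ m', ReflTransGen (SolveOrExpand R Acc expand) m₁ m' ∧
      ReflTransGen (SolveOrExpand R Acc expand) m₂ m' := by
  cases h₁ with
  | @solve a₁ b₁ ha₁ hab₁ =>
    cases h₂ with
    | @solve a₂ b₂ ha₂ hab₂ =>
      exact solve_solve_join hR_confluent ha₁ hab₁ ha₂ hab₂
    | @expand a₂ ha₂ hst₂ hac₂ =>
      exact solve_expand_join ha₁ hab₁ ha₂ hst₂ hac₂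
  | @expand a₁ ha₁ hst₁ hac₁ =>
    cases h₂ with
    | @solve a₂ b₂ ha₂ hab₂ =>
      obtain ⟨m', hl, hr⟩ := solve_expand_join ha₂ hab₂ ha₁ hst₁ hac₁
      exact ⟨m', hr, hl⟩
    | @expand a₂ ha₂ hst₂ hac₂ =>
      exact expand_expand_join ha₁ hst₁ hac₁ ha₂ hst₂ hac₂
end
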